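/- arXiv:1810.10415 — 3 statements merged into one kernel-verified Lean document; each statement's English description precedes it below -/
import Mathlib

section
/- Let k ∈ ℕ, k ≥ 1. For every t > 0 and θ ∈ (0,π), the k-th derivative of φ_t satisfies ∂_θ^k φ_t(θ) = φ_t(θ) · Σ_{(m₁,…,m_k) ∈ ℕ^k, m₁+2m₂+⋯+km_k = k} a_{m₁,…,m_k} t^{m₁+⋯+m_k} (cos θ)^{α_{m₁,…,m_k}} (sin θ)^{β_{m₁,…,m_k}}, where α_{m₁,…,m_k} = Σ_{j=1}^{⌊k/2⌋} m_{2j}, β_{m₁,…,m_k} = Σ_{j=1}^{⌊(k+1)/2⌋} m_{2j-1}, and a_{m₁,…,m_k} = (-1)^{Σ_{j=1}^{⌊k/2⌋} j·m_{2j} + Σ_{j=1}^{⌊(k+1)/2⌋} j·m_{2j-1}} · 2^{m₁+⋯+m_k} · k! / (m₁!·(1!)^{m₁} · m₂!·(2!)^{m₂} ⋯ m_k!·(k!)^{m_k}). -/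
open MeasureTheory Set
open scoped ENNReal NNReal Real

noncomputable section

/-- `φ_t(θ) = exp(-2t(1 - cos θ))`. -/
def phi (t θ : ℝ) : ℝ := Real.exp (-2 * t * (1 - Real.cos θ))

/-- `h_k(θ) = sin θ` if `k` is odd, `cos θ` if `k` is even. -/
def hfun (k : ℕ) (x : ℝ) : ℝ := if Odd k then Real.sin x else Real.cos x

/-- `G(n,t) = (1/π) ∫_0^π exp(-2t(1-cos θ)) cos(nθ) dθ`. -/
def Gker (n : ℤ) (t : ℝ) : ℝ :=
  (1 / Real.pi) * ∫ θ in (0:ℝ)..Real.pi, phi t θ * Real.cos ((n : ℝ) * θ)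

/-- `H_k(z,t) = z^{-k} ∫_0^π ∂_θ^k φ_t(θ) h_k(zθ) dθ`. -/
def Hker (k : ℕ) (z t : ℝ) : ℝ :=
  (1 / z ^ k) * ∫ θ in (0:ℝ)..Real.pi, iteratedDeriv k (phi t) θ * hfun k (z * θ)

/-- Kernel of the Laplace-transform-type multiplier:
`K_Ψ(n) = -∫_0^∞ Ψ(t) ∂_t G(n,t) dt`. -/
def Kker (Ψ : ℝ → ℂ) (n : ℤ) : ℂ :=
  -∫ t in Set.Ioi (0:ℝ), Ψ t * ((deriv (fun s => Gker n s) t : ℝ) : ℂ)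

/-- The ball `B_ℤ(n₀, r₀) = {n ∈ ℤ : |n - n₀| ≤ r₀}`. -/
def zball (n₀ : ℤ) (r₀ : ℝ) : Set ℤ := {n : ℤ | |(n : ℝ) - (n₀ : ℝ)| ≤ r₀}

/-- `b : ℤ → ℂ` is an `(H,p,2)`-atom: supported in a ball `B = B_ℤ(n₀,r₀)` with `r₀ ≥ 1`,
`ℓ²`-norm at most `(#B)^{1/2-1/p}`, and vanishing moments up to order `1/p - 1`. -/
def IsHAtom (p : ℝ) (b : ℤ → ℂ) : Prop :=
  ∃ (n₀ : ℤ) (r₀ : ℝ), 1 ≤ r₀ ∧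
    (∀ n : ℤ, b n ≠ 0 → n ∈ zball n₀ r₀) ∧
    Real.sqrt (∑' n : ℤ, ‖b n‖ ^ 2) ≤ ((zball n₀ r₀).ncard : ℝ) ^ ((1:ℝ)/2 - 1/p) ∧
    (∀ α : ℕ, (α : ℝ) ≤ 1/p - 1 → ∑' n : ℤ, (n : ℂ) ^ α * b n = 0)

/-!
Write `φ_t = exp ∘ g` with `g θ = -2t(1 - cos θ)`. Faà di Bruno's formula for `exp ∘ g` expresses
`(exp ∘ g)⁽ⁿ⁾` as `exp ∘ g` times the complete Bell polynomial in `g', …, g⁽ⁿ⁾`, whose coefficient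
at the multi-index `m` (`m i` parts of size `i + 1`) is `n! / ∏ (m i)! ((i + 1)!)^(m i)`. This is
proved by induction on `n` from `Yₙ₊₁ = g' Yₙ + Yₙ'`. Finally `g⁽ʲ⁾ θ = 2t cos (θ + jπ/2)`, which
is `±2t sin θ` for odd `j` and `±2t cos θ` for even `j`.
-/

namespace FaaDiBruno

open Finset Nat
open scoped ContDiff

variable {K : ℕ}

/-- A multi-index `m : Fin K → ℕ` encodes the partition with `m i` parts of size `i + 1`;
its weight is the number being partitioned. -/
def weight (m : Fin K → ℕ) : ℕ := ∑ i : Fin K, ((i : ℕ) + 1) * m i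

def multiIndices (K n : ℕ) : Finset (Fin K → ℕ) :=
  ((univ : Finset (Fin K → Fin (n + 1))).map
    (Function.Embedding.piCongrRight fun _ => Fin.valEmbedding)).filter (weight · = n)

def denom (m : Fin K → ℕ) : ℕ := ∏ i : Fin K, (m i)! * ((i : ℕ) + 1)! ^ m i

lemma mul_apply_le_weight (m : Fin K → ℕ) (i : Fin K) : ((i : ℕ) + 1) * m i ≤ weight m :=
  single_le_sum (f := fun i : Fin K => ((i : ℕ) + 1) * m i) (fun _ _ => Nat.zero_le _)
    (mem_univ i)

lemma apply_le_weight (m : Fin K → ℕ) (i : Fin K) : m i ≤ weight m :=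
  (Nat.le_mul_of_pos_left _ i.val.succ_pos).trans (mul_apply_le_weight m i)

lemma apply_eq_zero_of_weight_lt {m : Fin K → ℕ} {i : Fin K} (h : weight m < (i : ℕ) + 1) :
    m i = 0 := by
  by_contra hm
  have := mul_apply_le_weight m i
  have : (i : ℕ) + 1 ≤ ((i : ℕ) + 1) * m i := Nat.le_mul_of_pos_right _ (Nat.pos_of_ne_zero hm)
  omega

@[simp]
lemma mem_multiIndices {n : ℕ} {m : Fin K → ℕ} : m ∈ multiIndices K n ↔ weight m = n := by
  simp only [multiIndices, mem_filter, mem_map, and_iff_right_iff_imp]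
  rintro rfl
  exact ⟨fun i => ⟨m i, Nat.lt_succ_of_le (apply_le_weight m i)⟩, by simp, rfl⟩

lemma weight_add_single (m : Fin K → ℕ) (i : Fin K) :
    weight (m + Pi.single i 1) = weight m + ((i : ℕ) + 1) := by
  simp [weight, mul_add, sum_add_distrib, Pi.single_apply]

lemma prod_erase_add_single {M : Type*} [CommMonoid M] (f : Fin K → ℕ → M) (m : Fin K → ℕ)
    (i : Fin K) :
    ∏ j ∈ univ.erase i, f j ((m + Pi.single i 1 : Fin K → ℕ) j) = ∏ j ∈ univ.erase i, f j (m j) :=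
  prod_congr rfl fun j hj => by simp [Pi.single_eq_of_ne (ne_of_mem_erase hj)]

lemma prod_add_single {M : Type*} [CommMonoid M] (f : Fin K → ℕ → M) (m : Fin K → ℕ)
    (i : Fin K) :
    ∏ j, f j ((m + Pi.single i 1 : Fin K → ℕ) j) =
      f i (m i + 1) * ∏ j ∈ univ.erase i, f j (m j) := by
  rw [← mul_prod_erase univ _ (mem_univ i), prod_erase_add_single]
  simp

lemma denom_add_single (m : Fin K → ℕ) (i : Fin K) :
    denom (m + Pi.single i 1) = (m i + 1) * ((i : ℕ) + 1)! * denom m := by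
  rw [denom, denom, prod_add_single (fun j c => c ! * ((j : ℕ) + 1)! ^ c),
    ← mul_prod_erase univ _ (mem_univ i), factorial_succ, pow_succ]
  ring

lemma denom_pos (m : Fin K → ℕ) : 0 < denom m :=
  prod_pos fun _ _ => Nat.mul_pos (factorial_pos _) (Nat.pow_pos (factorial_pos _))

lemma sub_single_add_single {m : Fin K → ℕ} {i : Fin K} (h : m i ≠ 0) :
    m - Pi.single i 1 + Pi.single i 1 = m := by
  funext j
  by_cases hj : j = i
  · subst hj
    simp only [Pi.add_apply, Pi.sub_apply, Pi.single_eq_same]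
    omega
  · simp [hj]

lemma sum_multiIndices_apply_smul {M : Type*} [AddCommMonoid M] (F : (Fin K → ℕ) → M)
    (i : Fin K) (w : ℕ) :
    ∑ m ∈ multiIndices K (w + ((i : ℕ) + 1)), m i • F m =
      ∑ m ∈ multiIndices K w, (m i + 1) • F (m + Pi.single i 1) := by
  rw [← sum_filter_of_ne (p := fun m => m i ≠ 0) fun m _ h hm => h (by simp [hm])]
  refine sum_nbij' (· - Pi.single i 1) (· + Pi.single i 1) ?_ ?_ ?_ ?_ ?_
  all_goals intro m hm; simp only [mem_filter, mem_multiIndices] at hm ⊢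
  · have := weight_add_single (m - Pi.single i 1) i
    rw [sub_single_add_single hm.2] at this
    omega
  · simp [weight_add_single, hm]
  · exact sub_single_add_single hm.2
  · exact add_tsub_cancel_right m _
  · rw [sub_single_add_single hm.2]
    congr 1
    simp only [Pi.sub_apply, Pi.single_eq_same]
    omega

lemma sum_multiIndices_apply_mul_div_denom (H : (Fin K → ℕ) → ℝ) (i : Fin K) (w : ℕ) :
    ∑ m ∈ multiIndices K (w + ((i : ℕ) + 1)), (m i : ℝ) * (H m / denom m) =
      ∑ m ∈ multiIndices K w, H (m + Pi.single i 1) / (((i : ℕ) + 1)! * denom m) := by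
  simp_rw [← nsmul_eq_mul, sum_multiIndices_apply_smul, nsmul_eq_mul]
  refine sum_congr rfl fun m _ => ?_
  rw [denom_add_single]
  have := denom_pos m
  have := factorial_pos ((i : ℕ) + 1)
  push_cast
  field_simp

lemma sum_multiIndices_apply_mul_eq_zero (G : (Fin K → ℕ) → ℝ) {n : ℕ} {i : Fin K}
    (h : n < (i : ℕ) + 1) : ∑ m ∈ multiIndices K n, (m i : ℝ) * G m = 0 :=
  sum_eq_zero fun m hm => by
    rw [apply_eq_zero_of_weight_lt ((mem_multiIndices.1 hm).trans_lt h), Nat.cast_zero, zero_mul]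

def bellMonomial (d : ℕ → ℝ) (m : Fin K → ℕ) : ℝ := ∏ i : Fin K, d (i + 1) ^ m i

lemma bellMonomial_add_single (d : ℕ → ℝ) (m : Fin K → ℕ) (i : Fin K) :
    bellMonomial d (m + Pi.single i 1) = d (i + 1) * bellMonomial d m := by
  rw [bellMonomial, bellMonomial, prod_add_single (fun j c => d (j + 1) ^ c),
    ← mul_prod_erase univ _ (mem_univ i), pow_succ]
  ring

/-- For `n ≤ K` this is the complete Bell polynomial `Y_n (d 1, …, d n)`. -/
def completeBell (K n : ℕ) (d : ℕ → ℝ) : ℝ :=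
  ∑ m ∈ multiIndices K n, (n ! : ℝ) / denom m * bellMonomial d m

lemma completeBell_succ_eq_sum (n : ℕ) (d : ℕ → ℝ) :
    completeBell K (n + 1) d = ∑ i : Fin K, ∑ m ∈ multiIndices K (n + 1),
      ((i : ℕ) + 1 : ℝ) * ((m i : ℝ) * (n ! * bellMonomial d m / denom m)) := by
  rw [completeBell, sum_comm]
  refine sum_congr rfl fun m hm => ?_
  have hw : ((n + 1 : ℕ) : ℝ) = ∑ i : Fin K, ((i : ℕ) + 1 : ℝ) * m i := by
    rw [← mem_multiIndices.1 hm, weight]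
    push_cast
    rfl
  rw [factorial_succ, Nat.cast_mul, hw, sum_mul, sum_div, sum_mul]
  exact sum_congr rfl fun i _ => by ring

/-- The derivative of `bellMonomial d m` when each `d j` differentiates to `d (j + 1)`. -/
def bellMonomialDeriv (d : ℕ → ℝ) (m : Fin K → ℕ) : ℝ :=
  ∑ i : Fin K, (m i : ℝ) *
    ((∏ j ∈ univ.erase i, d (j + 1) ^ m j) * d (i + 1) ^ (m i - 1) * d (i + 2))

lemma bellMonomialDeriv_term_add_single (d : ℕ → ℝ) (m : Fin K → ℕ) (i : Fin K) :
    (∏ j ∈ univ.erase i, d (j + 1) ^ (m + Pi.single i 1 : Fin K → ℕ) j) *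
        d (i + 1) ^ ((m + Pi.single i 1 : Fin K → ℕ) i - 1) * d (i + 2) =
      d (i + 2) * bellMonomial d m := by
  rw [prod_erase_add_single (fun j c => d (j + 1) ^ c), bellMonomial,
    ← prod_erase_mul univ _ (mem_univ i)]
  simp only [Pi.add_apply, Pi.single_eq_same, add_tsub_cancel_right]
  ring

/-- Writing `(n + 1)! = n! * ∑ i, (i + 1) * m i` splits `completeBell K (n + 1) d` into columns.
Removing one part of size `i + 1` from the multi-index turns the `0`-th column into
`d 1 * completeBell K n d`, and the `i`-th column, for `i > 0`, into the same sum over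
`multiIndices K (n - i)` that the `(i - 1)`-th column of the derivative term becomes after removing
a part of size `i`. -/
lemma completeBell_succ {n : ℕ} (hn : n < K) (d : ℕ → ℝ) :
    completeBell K (n + 1) d =
      d 1 * completeBell K n d +
        ∑ m ∈ multiIndices K n, n ! / denom m * bellMonomialDeriv d m := by
  obtain ⟨K, rfl⟩ : ∃ K', K = K' + 1 := ⟨K - 1, by omega⟩
  have hderiv : ∑ m ∈ multiIndices (K + 1) n, n ! / denom m * bellMonomialDeriv d m =
      ∑ i : Fin (K + 1), ∑ m ∈ multiIndices (K + 1) n, (m i : ℝ) *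
        (n ! * ((∏ j ∈ univ.erase i, d (j + 1) ^ m j) * d (i + 1) ^ (m i - 1) * d (i + 2)) /
          denom m) := by
    simp_rw [bellMonomialDeriv, mul_sum]
    rw [sum_comm]
    exact sum_congr rfl fun i _ => sum_congr rfl fun m _ => by ring
  rw [completeBell_succ_eq_sum, hderiv, Fin.sum_univ_succ, Fin.sum_univ_castSucc,
    sum_multiIndices_apply_mul_eq_zero _ (by simpa using hn), add_zero]
  congr 1
  · have := sum_multiIndices_apply_mul_div_denom (fun m => n ! * bellMonomial d m)
      (0 : Fin (K + 1)) n
    simp only [Fin.val_zero, Nat.cast_zero, zero_add, factorial_one, Nat.cast_one, one_mul]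
      at this ⊢
    rw [this, completeBell, mul_sum]
    exact sum_congr rfl fun m _ => by rw [bellMonomial_add_single, Fin.val_zero]; ring
  · refine sum_congr rfl fun i _ => ?_
    rcases lt_or_ge n ((i : ℕ) + 1) with hlt | hle
    · rw [sum_multiIndices_apply_mul_eq_zero _ (by simpa using hlt),
        ← mul_sum, sum_multiIndices_apply_mul_eq_zero _ (by simpa using hlt), mul_zero]
    obtain ⟨w, rfl⟩ := Nat.exists_eq_add_of_le' hle
    have hT := sum_multiIndices_apply_mul_div_denom
      (fun m => (w + ((i : ℕ) + 1))! * bellMonomial d m) i.succ w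
    have hU := sum_multiIndices_apply_mul_div_denom (fun m => (w + ((i : ℕ) + 1))! *
      ((∏ j ∈ univ.erase i.castSucc, d (j + 1) ^ m j) * d (i.castSucc + 1) ^ (m i.castSucc - 1) *
        d (i.castSucc + 2)))
      i.castSucc w
    simp only [bellMonomial_add_single, bellMonomialDeriv_term_add_single] at hT hU
    simp only [Fin.val_succ, Fin.val_castSucc] at hT hU ⊢
    rw [← mul_sum, show w + ((i : ℕ) + 1) + 1 = w + ((i : ℕ) + 1 + 1) by ring, hT, hU, mul_sum]
    refine sum_congr rfl fun m _ => ?_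
    have := denom_pos m
    have := factorial_pos ((i : ℕ) + 1)
    rw [factorial_succ ((i : ℕ) + 1)]
    push_cast
    field_simp

lemma multiIndices_zero : multiIndices K 0 = {0} := by
  ext m
  simp [weight, funext_iff, sum_eq_zero_iff]

lemma completeBell_zero (d : ℕ → ℝ) : completeBell K 0 d = 1 := by
  simp [completeBell, multiIndices_zero, denom, bellMonomial]

lemma hasDerivAt_bellMonomial {d : ℕ → ℝ → ℝ} {x : ℝ}
    (hd : ∀ j, HasDerivAt (d j) (d (j + 1) x) x) (m : Fin K → ℕ) :
    HasDerivAt (fun y => bellMonomial (fun j => d j y) m)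
      (bellMonomialDeriv (fun j => d j x) m) x := by
  refine (HasDerivAt.fun_finsetProd fun (i : Fin K) _ =>
    (hd ((i : ℕ) + 1)).pow (m i)).congr_deriv ?_
  exact sum_congr rfl fun i _ => by simp only [smul_eq_mul, Pi.pow_apply]; ring

lemma hasDerivAt_completeBell {d : ℕ → ℝ → ℝ} {x : ℝ}
    (hd : ∀ j, HasDerivAt (d j) (d (j + 1) x) x) (K n : ℕ) :
    HasDerivAt (fun y => completeBell K n fun j => d j y)
      (∑ m ∈ multiIndices K n, n ! / denom m * bellMonomialDeriv (fun j => d j x) m) x :=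
  HasDerivAt.fun_sum fun m _ => (hasDerivAt_bellMonomial hd m).const_mul _

theorem iteratedDeriv_exp_comp {g : ℝ → ℝ} (hg : ContDiff ℝ ∞ g) {K n : ℕ} (hn : n ≤ K)
    (x : ℝ) :
    iteratedDeriv n (fun y => Real.exp (g y)) x =
      Real.exp (g x) * completeBell K n fun j => iteratedDeriv j g x := by
  induction n generalizing x with
  | zero => simp [completeBell_zero]
  | succ n ih =>
    have hd : ∀ j, HasDerivAt (iteratedDeriv j g) (iteratedDeriv (j + 1) g x) x := fun j => by
      rw [iteratedDeriv_succ]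
      exact (hg.differentiable_iteratedDeriv j (mod_cast WithTop.coe_lt_top _) x).hasDerivAt
    have hexp : HasDerivAt (fun y => Real.exp (g y)) (Real.exp (g x) * iteratedDeriv 1 g x) x :=
      by simpa using (hd 0).exp
    rw [iteratedDeriv_succ, funext (ih (Nat.le_of_succ_le hn)), completeBell_succ hn,
      (hexp.fun_mul (hasDerivAt_completeBell hd K n)).deriv]
    ring

end FaaDiBruno

open Finset Nat
open scoped ContDiff

lemma iteratedDeriv_cos_eq_neg_one_pow_mul_hfun (j : ℕ) (θ : ℝ) :
    iteratedDeriv j Real.cos θ = (-1) ^ ((j + 1) / 2) * hfun j θ := by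
  obtain ⟨k, rfl | rfl⟩ := Nat.even_or_odd' j
  · rw [Real.iteratedDeriv_even_cos, show (2 * k + 1) / 2 = k by omega]
    simp [hfun]
  · rw [Real.iteratedDeriv_odd_cos, show (2 * k + 1 + 1) / 2 = k + 1 by omega]
    simp [hfun]

lemma hfun_pow (j e : ℕ) (θ : ℝ) :
    hfun j θ ^ e =
      Real.cos θ ^ (if Even j then e else 0) * Real.sin θ ^ (if Odd j then e else 0) := by
  rcases Nat.even_or_odd j with h | h
  · simp [hfun, h, Nat.not_odd_iff_even.2 h]
  · simp [hfun, h, Nat.not_even_iff_odd.2 h]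

lemma iteratedDeriv_succ_phi_exponent (t : ℝ) (j : ℕ) (θ : ℝ) :
    iteratedDeriv (j + 1) (fun θ => -2 * t * (1 - Real.cos θ)) θ =
      2 * t * ((-1) ^ ((j + 2) / 2) * hfun (j + 1) θ) := by
  rw [iteratedDeriv_const_mul_field, iteratedDeriv_const_sub j.succ_pos, iteratedDeriv_neg,
    iteratedDeriv_cos_eq_neg_one_pow_mul_hfun]
  ring

theorem derivative_phi_formula_general (k : ℕ) (t : ℝ)
    (θ : ℝ) :
    iteratedDeriv k (phi t) θ =
      phi t θ *
        ∑ m : Fin k → Fin (k + 1),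
          if (∑ i : Fin k, ((i : ℕ) + 1) * (m i : ℕ)) = k then
            ((-1 : ℝ)) ^ (∑ i : Fin k, (((i : ℕ) + 2) / 2) * (m i : ℕ)) *
                (2 : ℝ) ^ (∑ i : Fin k, (m i : ℕ)) * (Nat.factorial k : ℝ) /
                (∏ i : Fin k,
                  ((Nat.factorial (m i : ℕ) * Nat.factorial ((i : ℕ) + 1) ^ (m i : ℕ) : ℕ) : ℝ)) *
              t ^ (∑ i : Fin k, (m i : ℕ)) *
              Real.cos θ ^ (∑ i : Fin k, if Even ((i : ℕ) + 1) then (m i : ℕ) else 0) *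
              Real.sin θ ^ (∑ i : Fin k, if Odd ((i : ℕ) + 1) then (m i : ℕ) else 0)
          else 0 := by
  have hg : ContDiff ℝ ∞ fun θ => -2 * t * (1 - Real.cos θ) := by fun_prop
  rw [show phi t = fun θ => Real.exp (-2 * t * (1 - Real.cos θ)) from rfl,
    FaaDiBruno.iteratedDeriv_exp_comp hg le_rfl, FaaDiBruno.completeBell,
    FaaDiBruno.multiIndices, sum_filter, sum_map]
  refine congrArg _ (sum_congr rfl fun m _ => ?_)
  simp only [FaaDiBruno.weight, FaaDiBruno.denom, Nat.cast_prod, FaaDiBruno.bellMonomial,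
    Function.Embedding.piCongrRight_apply, Fin.valEmbedding_apply]
  split_ifs
  · simp only [iteratedDeriv_succ_phi_exponent, mul_pow, ← pow_mul, hfun_pow, prod_mul_distrib,
      prod_pow_eq_pow_sum]
    ring
  · rfl

/-- Faa di Bruno expansion of the k-th derivative of phi_t (Lemma 2.1). -/
theorem derivative_phi_formula (k : ℕ) (hk : 1 ≤ k) (t : ℝ) (ht : 0 < t)
    (θ : ℝ) (hθ : θ ∈ Set.Ioo 0 Real.pi) :
    iteratedDeriv k (phi t) θ =
      phi t θ *
        ∑ m : Fin k → Fin (k + 1),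
          if (∑ i : Fin k, ((i : ℕ) + 1) * (m i : ℕ)) = k then
            ((-1 : ℝ)) ^ (∑ i : Fin k, (((i : ℕ) + 2) / 2) * (m i : ℕ)) *
                (2 : ℝ) ^ (∑ i : Fin k, (m i : ℕ)) * (Nat.factorial k : ℝ) /
                (∏ i : Fin k,
                  ((Nat.factorial (m i : ℕ) * Nat.factorial ((i : ℕ) + 1) ^ (m i : ℕ) : ℕ) : ℝ)) *
              t ^ (∑ i : Fin k, (m i : ℕ)) *
              Real.cos θ ^ (∑ i : Fin k, if Even ((i : ℕ) + 1) then (m i : ℕ) else 0) *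
              Real.sin θ ^ (∑ i : Fin k, if Odd ((i : ℕ) + 1) then (m i : ℕ) else 0)
          else 0 :=
  derivative_phi_formula_general k t θ
end
end

section
/- Let k ∈ ℕ. For every m ∈ ℤ with m ≠ 0 and every t > 0, G(m,t) = ((-1)^{⌊(k+1)/2⌋} / (π m^k)) ∫_0^π ∂_θ^k φ_t(θ) h_k(mθ) dθ. -/
open MeasureTheory Set
open scoped ENNReal NNReal Real

noncomputable section

/-!
Integrate by parts `k` times. The step from `∂^(j+1) φ_t · h_(j+1)(mθ)` to
`∂^j φ_t · h_j(mθ)` costs a factor `(-1)^(j+1) m`, and its boundary terms at `0` and `π`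
vanish: for even `j` because `h_(j+1)(mθ) = sin (mθ)` with `m` an integer, for odd `j` because
`φ_t` is symmetric about both `0` and `π`, so its odd derivatives vanish there. The signs
accumulate to `(-1)^(1 + ⋯ + k) = (-1)^⌊(k+1)/2⌋`.
-/

lemma iteratedDeriv_eq_zero_of_odd_of_reflect {F : Type*} [NormedAddCommGroup F]
    [NormedSpace ℝ F] {f : ℝ → F} {a : ℝ} (hf : ∀ x, f (2 * a - x) = f x) {n : ℕ}
    (hn : Odd n) : iteratedDeriv n f a = 0 := by
  have h := congr_fun (iteratedDeriv_comp_const_sub n f (2 * a)) a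
  rw [funext hf, show 2 * a - a = a by ring, hn.neg_one_pow, neg_one_smul] at h
  have : IsAddTorsionFree F := .of_isTorsionFree ℝ F
  exact self_eq_neg.mp h

lemma neg_one_pow_add_two_div_two {R : Type*} [Monoid R] [HasDistribNeg R] (k : ℕ) :
    (-1 : R) ^ ((k + 2) / 2) = (-1) ^ (k + 1) * (-1) ^ ((k + 1) / 2) := by
  obtain ⟨j, rfl | rfl⟩ := Nat.even_or_odd' k
  · rw [show (2 * j + 2) / 2 = j + 1 by omega, show (2 * j + 1) / 2 = j by omega, pow_succ',
      pow_succ, pow_mul, neg_one_sq, one_pow, one_mul]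
  · rw [show (2 * j + 1 + 2) / 2 = j + 1 by omega, show (2 * j + 1 + 1) / 2 = j + 1 by omega,
      show 2 * j + 1 + 1 = 2 * (j + 1) by omega, pow_mul, neg_one_sq, one_pow, one_mul]

lemma continuous_hfun (k : ℕ) : Continuous (hfun k) := by
  unfold hfun
  split_ifs
  exacts [Real.continuous_sin, Real.continuous_cos]

lemma hasDerivAt_hfun_succ (k : ℕ) (x : ℝ) :
    HasDerivAt (hfun (k + 1)) ((-1) ^ k * hfun k x) x := by
  rcases Nat.even_or_odd k with hk | hk
  · have hsin : hfun (k + 1) = Real.sin := funext fun _ => if_pos hk.add_one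
    simpa [hsin, hfun, Nat.not_odd_iff_even.mpr hk, hk.neg_one_pow] using Real.hasDerivAt_sin x
  · have hcos : hfun (k + 1) = Real.cos := funext fun _ => if_neg (by simpa [Nat.odd_add_one])
    simpa [hcos, hfun, hk, hk.neg_one_pow] using Real.hasDerivAt_cos x

lemma contDiff_phi (t : ℝ) : ContDiff ℝ ⊤ (phi t) :=
  Real.contDiff_exp.comp (contDiff_const.mul (contDiff_const.sub Real.contDiff_cos))

lemma phi_reflect_int_mul_pi (t : ℝ) (j : ℤ) (θ : ℝ) :
    phi t (2 * (j * π) - θ) = phi t θ := by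
  rw [phi, phi, show 2 * (j * π) - θ = j * (2 * π) - θ by ring, Real.cos_int_mul_two_pi_sub]

lemma hfun_succ_mul_iteratedDeriv_phi_int_mul_pi (t : ℝ) (k : ℕ) (m j : ℤ) :
    iteratedDeriv k (phi t) (j * π) * hfun (k + 1) (m * (j * π)) = 0 := by
  rcases Nat.even_or_odd k with hk | hk
  · rw [hfun, if_pos hk.add_one, ← mul_assoc, ← Int.cast_mul, Real.sin_int_mul_pi, mul_zero]
  · rw [iteratedDeriv_eq_zero_of_odd_of_reflect (phi_reflect_int_mul_pi t j) hk, zero_mul]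

lemma integral_iteratedDeriv_succ_phi_mul_hfun (t : ℝ) (k : ℕ) (m : ℤ) :
    ∫ θ in (0:ℝ)..π, iteratedDeriv (k + 1) (phi t) θ * hfun (k + 1) (m * θ)
      = (-1) ^ (k + 1) * m *
        ∫ θ in (0:ℝ)..π, iteratedDeriv k (phi t) θ * hfun k (m * θ) := by
  have hderiv_phi : ∀ θ ∈ uIcc 0 π,
      HasDerivAt (iteratedDeriv k (phi t)) (iteratedDeriv (k + 1) (phi t) θ) θ := fun θ _ => by
    rw [iteratedDeriv_succ]
    exact ((contDiff_phi t).differentiable_iteratedDeriv k (by simp)).differentiableAt.hasDerivAt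
  have hderiv_hfun : ∀ θ ∈ uIcc 0 π,
      HasDerivAt (fun θ => hfun (k + 1) (m * θ)) ((-1) ^ k * m * hfun k (m * θ)) θ :=
    fun θ _ => by
      simpa [Function.comp_def, mul_right_comm] using
        (hasDerivAt_hfun_succ k (m * θ)).comp θ ((hasDerivAt_id θ).const_mul (m : ℝ))
  have hparts := intervalIntegral.integral_mul_deriv_eq_deriv_mul hderiv_phi hderiv_hfun
    (((contDiff_phi t).continuous_iteratedDeriv _ le_top).intervalIntegrable _ _)
    ((continuous_const.mul ((continuous_hfun k).comp (continuous_const_mul _))).intervalIntegrable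
      _ _)
  have hconst : ∫ θ in (0:ℝ)..π, iteratedDeriv k (phi t) θ * ((-1) ^ k * m * hfun k (m * θ))
      = (-1) ^ k * m * ∫ θ in (0:ℝ)..π, iteratedDeriv k (phi t) θ * hfun k (m * θ) := by
    rw [← intervalIntegral.integral_const_mul]
    congr 1 with θ
    ring
  have hboundary_zero := hfun_succ_mul_iteratedDeriv_phi_int_mul_pi t k m 0
  have hboundary_pi := hfun_succ_mul_iteratedDeriv_phi_int_mul_pi t k m 1
  simp only [Int.cast_zero, Int.cast_one, zero_mul, one_mul] at hboundary_zero hboundary_pi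
  rw [hconst, hboundary_zero, hboundary_pi] at hparts
  linear_combination hparts

lemma integral_iteratedDeriv_phi_mul_hfun (t : ℝ) (k : ℕ) (m : ℤ) :
    ∫ θ in (0:ℝ)..π, iteratedDeriv k (phi t) θ * hfun k (m * θ)
      = (-1) ^ ((k + 1) / 2) * m ^ k * ∫ θ in (0:ℝ)..π, phi t θ * Real.cos (m * θ) := by
  induction k with
  | zero => simp [hfun]
  | succ k ih =>
    rw [integral_iteratedDeriv_succ_phi_mul_hfun, ih, neg_one_pow_add_two_div_two]
    ring

theorem Gker_repr_general (k : ℕ) (m : ℤ) (hm : m ≠ 0) (t : ℝ) :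
    Gker m t =
      ((-1 : ℝ) ^ ((k + 1) / 2) / (Real.pi * (m : ℝ) ^ k)) *
        ∫ θ in (0:ℝ)..Real.pi, iteratedDeriv k (phi t) θ * hfun k ((m : ℝ) * θ) := by
  have hmk : (m : ℝ) ^ k ≠ 0 := pow_ne_zero k (Int.cast_ne_zero.mpr hm)
  rw [integral_iteratedDeriv_phi_mul_hfun, Gker]
  field_simp
  rw [← pow_mul, pow_mul', neg_one_sq, one_pow, mul_one]

/-- Integration-by-parts representation of G(m,t) (Lemma 2.3). -/
theorem Gker_repr (k : ℕ) (m : ℤ) (hm : m ≠ 0) (t : ℝ) (ht : 0 < t) :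
    Gker m t =
      ((-1 : ℝ) ^ ((k + 1) / 2) / (Real.pi * (m : ℝ) ^ k)) *
        ∫ θ in (0:ℝ)..Real.pi, iteratedDeriv k (phi t) θ * hfun k ((m : ℝ) * θ) :=
  Gker_repr_general k m hm t
end
end

section
/- Let k ∈ ℕ, k ≥ 1. There exists a constant C > 0 such that for every z ∈ ℝ and every t > 0, |∫_0^π ∂_θ^k φ_t(θ) θ^{k-1} sin(zθ) dθ| ≤ C. -/
/-!
Differentiating `φ_t(θ) = exp(-2t(1 - cos θ))` in `θ` turns a monomial `t^l sin^a θ cos^b θ φ_t(θ)`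
into monomials `(l, a - 1, b + 1)`, `(l, a + 1, b - 1)`, `(l + 1, a + 1, b)`, so `∂_θ^k φ_t` is a
linear combination of monomials with `l ≥ 1` and `2l ≤ a + k`. On `[0, π]` we have `|sin θ| ≤ θ`
and `φ_t(θ) ≤ exp(-4tθ²/π²)`, hence such a monomial times `θ^{k-1}` is at most a constant times
`(tθ²)^{l-1} e^{-2tθ²/π²} · tθ e^{-2tθ²/π²} ≤ (l-1)! (π²/2)^{l-1} · tθ e^{-2tθ²/π²}`,
and `∫_0^π tθ e^{-2tθ²/π²} dθ ≤ π²/4` uniformly in `t`.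
-/

open MeasureTheory Set
open scoped ENNReal NNReal Real

noncomputable section

open Real Submodule
open scoped Nat

def phiMonomial (l a b : ℕ) (t θ : ℝ) : ℝ :=
  t ^ l * sin θ ^ a * cos θ ^ b * phi t θ

def phiMonomials (k : ℕ) : Set (ℝ → ℝ → ℝ) :=
  {f | ∃ l a b, 1 ≤ l ∧ 2 * l ≤ a + k ∧ f = phiMonomial l a b}

lemma hasDerivAt_phi (t θ : ℝ) : HasDerivAt (phi t) (-2 * t * sin θ * phi t θ) θ := by
  have h := (((hasDerivAt_cos θ).const_sub 1).const_mul (-2 * t)).exp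
  exact h.congr_deriv (by rw [phi]; ring)

lemma hasDerivAt_phiMonomial (l a b : ℕ) (t θ : ℝ) :
    HasDerivAt (phiMonomial l a b t)
      (a * phiMonomial l (a - 1) (b + 1) t θ - b * phiMonomial l (a + 1) (b - 1) t θ
        - 2 * phiMonomial (l + 1) (a + 1) b t θ) θ := by
  have hs : HasDerivAt (fun x => sin x ^ a) (a * sin θ ^ (a - 1) * cos θ) θ :=
    (hasDerivAt_sin θ).pow a
  have hc : HasDerivAt (fun x => cos x ^ b) (b * cos θ ^ (b - 1) * -sin θ) θ :=
    (hasDerivAt_cos θ).pow b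
  have h := ((hs.const_mul (t ^ l)).fun_mul hc).fun_mul (hasDerivAt_phi t θ)
  exact h.congr_deriv (by simp only [phiMonomial]; ring)

lemma exists_hasDerivAt_mem_span_phiMonomials {k : ℕ} {f : ℝ → ℝ → ℝ}
    (hf : f ∈ span ℝ (phiMonomials k)) :
    ∃ g ∈ span ℝ (phiMonomials (k + 1)), ∀ t θ, HasDerivAt (f t) (g t θ) θ := by
  induction hf using span_induction with
  | mem f hf =>
    obtain ⟨l, a, b, hl, hlak, rfl⟩ := hf
    have mem : ∀ {l' a' b'}, 1 ≤ l' → 2 * l' ≤ a' + (k + 1) →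
        phiMonomial l' a' b' ∈ span ℝ (phiMonomials (k + 1)) :=
      fun hl' hlak' => subset_span ⟨_, _, _, hl', hlak', rfl⟩
    refine ⟨(a : ℝ) • phiMonomial l (a - 1) (b + 1) - (b : ℝ) • phiMonomial l (a + 1) (b - 1)
      - (2 : ℝ) • phiMonomial (l + 1) (a + 1) b, ?_, fun t θ => hasDerivAt_phiMonomial l a b t θ⟩
    exact sub_mem (sub_mem (smul_mem _ _ (mem hl (by omega))) (smul_mem _ _ (mem hl (by omega))))
      (smul_mem _ _ (mem (by omega) (by omega)))
  | zero => exact ⟨0, zero_mem _, fun t θ => hasDerivAt_const θ 0⟩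
  | add f₁ f₂ _ _ ih₁ ih₂ =>
    obtain ⟨g₁, hg₁, hd₁⟩ := ih₁
    obtain ⟨g₂, hg₂, hd₂⟩ := ih₂
    exact ⟨g₁ + g₂, add_mem hg₁ hg₂, fun t θ => (hd₁ t θ).add (hd₂ t θ)⟩
  | smul c f _ ih =>
    obtain ⟨g, hg, hd⟩ := ih
    exact ⟨c • g, smul_mem _ c hg, fun t θ => (hd t θ).const_mul c⟩

lemma iteratedDeriv_phi_mem_span {k : ℕ} (hk : 1 ≤ k) :
    (fun t => iteratedDeriv k (phi t)) ∈ span ℝ (phiMonomials k) := by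
  induction k, hk using Nat.le_induction with
  | base =>
    have h : (fun t => iteratedDeriv 1 (phi t)) = (-2 : ℝ) • phiMonomial 1 1 0 := by
      funext t θ
      rw [iteratedDeriv_one, (hasDerivAt_phi t θ).deriv]
      simp only [phiMonomial, Pi.smul_apply, smul_eq_mul]
      ring
    exact h ▸ smul_mem _ _ (subset_span ⟨1, 1, 0, le_rfl, le_rfl, rfl⟩)
  | succ k _ ih =>
    obtain ⟨g, hg, hd⟩ := exists_hasDerivAt_mem_span_phiMonomials ih
    convert hg using 2 with t
    funext θ
    rw [iteratedDeriv_succ, (hd t θ).deriv]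

lemma phi_le_exp_neg_sq {t θ : ℝ} (ht : 0 ≤ t) (hθ : |θ| ≤ π) :
    phi t θ ≤ exp (-(4 * t * θ ^ 2 / π ^ 2)) := by
  have hcos := cos_le_one_sub_mul_cos_sq hθ
  rw [phi, exp_le_exp]
  have : 4 * t * θ ^ 2 / π ^ 2 = 2 * t * (2 / π ^ 2 * θ ^ 2) := by ring
  nlinarith

lemma abs_phiMonomial_le (l a b : ℕ) {t θ : ℝ} (ht : 0 ≤ t) (hθ : θ ∈ Icc 0 π) :
    |phiMonomial l a b t θ| ≤ t ^ l * θ ^ a * exp (-(4 * t * θ ^ 2 / π ^ 2)) := by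
  obtain ⟨hθ0, hθπ⟩ := hθ
  have hsin : |sin θ| ≤ θ := abs_sin_le_abs.trans (abs_of_nonneg hθ0).le
  have hphi : |phi t θ| ≤ exp (-(4 * t * θ ^ 2 / π ^ 2)) := by
    have hpos : 0 < phi t θ := exp_pos _
    rw [abs_of_pos hpos]
    exact phi_le_exp_neg_sq ht (by rwa [abs_of_nonneg hθ0])
  calc |phiMonomial l a b t θ| = t ^ l * |sin θ| ^ a * |cos θ| ^ b * |phi t θ| := by
        simp only [phiMonomial, abs_mul, abs_pow, abs_of_nonneg ht]
    _ ≤ t ^ l * θ ^ a * 1 * exp (-(4 * t * θ ^ 2 / π ^ 2)) := by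
        have hcos : |cos θ| ^ b ≤ 1 := pow_le_one₀ (abs_nonneg _) (abs_cos_le_one θ)
        gcongr
    _ = t ^ l * θ ^ a * exp (-(4 * t * θ ^ 2 / π ^ 2)) := by rw [mul_one]

lemma pow_mul_exp_neg_le_factorial (n : ℕ) {y : ℝ} (hy : 0 ≤ y) : y ^ n * exp (-y) ≤ n ! := by
  have h := pow_div_factorial_le_exp y hy n
  rw [div_le_iff₀ (by positivity)] at h
  rw [exp_neg, ← div_eq_mul_inv, div_le_iff₀ (exp_pos y)]
  linarith

def gaussianWeight (t θ : ℝ) : ℝ := t * θ * exp (-(2 * t * θ ^ 2 / π ^ 2))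

lemma continuous_gaussianWeight (t : ℝ) : Continuous (gaussianWeight t) := by
  unfold gaussianWeight; fun_prop

lemma integral_gaussianWeight (t : ℝ) :
    ∫ θ in (0 : ℝ)..π, gaussianWeight t θ = π ^ 2 / 4 * (1 - exp (-(2 * t))) := by
  have hderiv (θ : ℝ) : HasDerivAt (fun x => -(π ^ 2 / 4) * exp (-(2 * t * x ^ 2 / π ^ 2)))
      (gaussianWeight t θ) θ := by
    have h := ((((hasDerivAt_pow 2 θ).const_mul (2 * t)).div_const (π ^ 2)).neg.exp).const_mul
      (-(π ^ 2 / 4))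
    exact h.congr_deriv (by simp only [gaussianWeight, Pi.neg_apply]; field_simp; ring)
  rw [intervalIntegral.integral_eq_sub_of_hasDerivAt (fun θ _ => hderiv θ)
    ((continuous_gaussianWeight t).intervalIntegrable _ _)]
  simp only [ne_eq, OfNat.ofNat_ne_zero, not_false_eq_true, zero_pow, mul_zero, zero_div,
    neg_zero, exp_zero]
  field_simp
  ring_nf

lemma pow_mul_exp_le_gaussianWeight (m : ℕ) {t θ : ℝ} (ht : 0 ≤ t) (hθ : 0 ≤ θ) :
    t ^ (m + 1) * θ ^ (2 * m + 1) * exp (-(4 * t * θ ^ 2 / π ^ 2)) ≤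
      m ! * (π ^ 2 / 2) ^ m * gaussianWeight t θ := by
  set s := 2 * t * θ ^ 2 / π ^ 2 with hs
  have hexp : exp (-(4 * t * θ ^ 2 / π ^ 2)) = exp (-s) * exp (-s) := by
    rw [← exp_add, hs]; ring_nf
  have hpow : t ^ (m + 1) * θ ^ (2 * m + 1) = (π ^ 2 / 2) ^ m * s ^ m * (t * θ) := by
    rw [← mul_pow, hs]; field_simp; ring
  have hw : 0 ≤ gaussianWeight t θ := by unfold gaussianWeight; positivity
  calc t ^ (m + 1) * θ ^ (2 * m + 1) * exp (-(4 * t * θ ^ 2 / π ^ 2))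
      = (π ^ 2 / 2) ^ m * (s ^ m * exp (-s)) * gaussianWeight t θ := by
        rw [hexp, hpow, gaussianWeight]; ring
    _ ≤ (π ^ 2 / 2) ^ m * m ! * gaussianWeight t θ := by
        gcongr
        exact pow_mul_exp_neg_le_factorial m (by positivity)
    _ = m ! * (π ^ 2 / 2) ^ m * gaussianWeight t θ := by ring

def gaussDominated (k : ℕ) : Submodule ℝ (ℝ → ℝ → ℝ) where
  carrier := {f | ∃ C, 0 ≤ C ∧
    ∀ t, 0 ≤ t → ∀ θ ∈ Icc 0 π, |f t θ| * θ ^ (k - 1) ≤ C * gaussianWeight t θ}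
  zero_mem' := ⟨0, le_rfl, fun t _ θ _ => by simp⟩
  add_mem' := by
    rintro f g ⟨C, hC, hf⟩ ⟨D, hD, hg⟩
    refine ⟨C + D, add_nonneg hC hD, fun t ht θ hθ => ?_⟩
    have hpow : 0 ≤ θ ^ (k - 1) := pow_nonneg hθ.1 _
    calc |(f + g) t θ| * θ ^ (k - 1) ≤ (|f t θ| + |g t θ|) * θ ^ (k - 1) := by
          gcongr; exact abs_add_le _ _
      _ ≤ C * gaussianWeight t θ + D * gaussianWeight t θ := by
          rw [add_mul]; exact add_le_add (hf t ht θ hθ) (hg t ht θ hθ)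
      _ = (C + D) * gaussianWeight t θ := by ring
  smul_mem' := by
    rintro c f ⟨C, hC, hf⟩
    refine ⟨|c| * C, by positivity, fun t ht θ hθ => ?_⟩
    simp only [Pi.smul_apply, smul_eq_mul, abs_mul, mul_assoc]
    exact mul_le_mul_of_nonneg_left (hf t ht θ hθ) (abs_nonneg c)

lemma phiMonomials_subset_gaussDominated (k : ℕ) : phiMonomials k ⊆ gaussDominated k := by
  rintro _ ⟨l, a, b, hl, hlak, rfl⟩
  obtain ⟨m, rfl⟩ := Nat.exists_eq_add_of_le' hl
  set n := a + (k - 1) - (2 * m + 1)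
  refine ⟨π ^ n * (m ! * (π ^ 2 / 2) ^ m), by positivity, fun t ht θ hθ => ?_⟩
  have hθ0 : 0 ≤ θ := hθ.1
  have hθpow : θ ^ (a + (k - 1)) ≤ π ^ n * θ ^ (2 * m + 1) := by
    rw [show a + (k - 1) = n + (2 * m + 1) by omega, pow_add]
    gcongr
    exact hθ.2
  calc |phiMonomial (m + 1) a b t θ| * θ ^ (k - 1)
      ≤ t ^ (m + 1) * θ ^ a * exp (-(4 * t * θ ^ 2 / π ^ 2)) * θ ^ (k - 1) := by
        gcongr
        exact abs_phiMonomial_le _ a b ht hθ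
    _ = θ ^ (a + (k - 1)) * (t ^ (m + 1) * exp (-(4 * t * θ ^ 2 / π ^ 2))) := by ring
    _ ≤ π ^ n * θ ^ (2 * m + 1) * (t ^ (m + 1) * exp (-(4 * t * θ ^ 2 / π ^ 2))) := by gcongr
    _ = π ^ n * (t ^ (m + 1) * θ ^ (2 * m + 1) * exp (-(4 * t * θ ^ 2 / π ^ 2))) := by ring
    _ ≤ π ^ n * (m ! * (π ^ 2 / 2) ^ m * gaussianWeight t θ) := by
        gcongr π ^ n * ?_
        exact pow_mul_exp_le_gaussianWeight m ht hθ0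
    _ = π ^ n * (m ! * (π ^ 2 / 2) ^ m) * gaussianWeight t θ := by ring

/-- Uniform bound (2.4) in the paper. -/
theorem integral_deriv_phi_sin_bounded (k : ℕ) (hk : 1 ≤ k) :
    ∃ C : ℝ, 0 < C ∧ ∀ (z t : ℝ), 0 < t →
      |∫ θ in (0:ℝ)..Real.pi, iteratedDeriv k (phi t) θ * θ ^ (k - 1) * Real.sin (z * θ)|
        ≤ C := by
  obtain ⟨C, hC, hbound⟩ :=
    span_le.2 (phiMonomials_subset_gaussDominated k) (iteratedDeriv_phi_mem_span hk)
  refine ⟨C * (π ^ 2 / 4) + 1, by positivity, fun z t ht => ?_⟩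
  have hpointwise : ∀ θ ∈ Ioc 0 π,
      ‖iteratedDeriv k (phi t) θ * θ ^ (k - 1) * sin (z * θ)‖ ≤ C * gaussianWeight t θ := by
    intro θ hθ
    have hθ0 : 0 ≤ θ := hθ.1.le
    rw [norm_mul, norm_mul, norm_pow, Real.norm_eq_abs, Real.norm_eq_abs, Real.norm_eq_abs,
      abs_of_nonneg hθ0]
    calc |iteratedDeriv k (phi t) θ| * θ ^ (k - 1) * |sin (z * θ)|
        ≤ |iteratedDeriv k (phi t) θ| * θ ^ (k - 1) :=
          mul_le_of_le_one_right (by positivity) (abs_sin_le_one _)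
      _ ≤ C * gaussianWeight t θ := hbound t ht.le θ (Ioc_subset_Icc_self hθ)
  calc |∫ θ in (0:ℝ)..π, iteratedDeriv k (phi t) θ * θ ^ (k - 1) * sin (z * θ)|
      ≤ ∫ θ in (0:ℝ)..π, C * gaussianWeight t θ :=
        intervalIntegral.norm_integral_le_of_norm_le pi_pos.le (ae_of_all _ hpointwise)
          (((continuous_gaussianWeight t).intervalIntegrable _ _).const_mul C)
    _ = C * (π ^ 2 / 4 * (1 - exp (-(2 * t)))) := by
        rw [intervalIntegral.integral_const_mul, integral_gaussianWeight]
    _ ≤ C * (π ^ 2 / 4) + 1 := by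
        have hexp := exp_pos (-(2 * t))
        nlinarith [mul_nonneg hC (sq_nonneg π)]
end
end
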